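/- arXiv:1807.10514 — 2 statements merged into one kernel-verified Lean document; each statement's English description precedes it below -/
import Mathlib

section
/- For every f ∈ ℝ^V and α ≥ 0, the unique minimizer u_α of u ↦ ½‖f − u‖₂² + αJ(u) over ℝ^V is the unique element of minimal ℓ² norm in the set f − α∂J(0); that is, u_α ∈ f − α∂J(0) and ‖u_α‖₂ ≤ ‖u‖₂ for all u ∈ f − α∂J(0). -/
open Finset MeasureTheory

noncomputable section

/-- The graph total variation `J(u) = ∑_{(v,w) ∈ E} |u(w) - u(v)|`. -/
def tvJ {V : Type*} (E : Finset (V × V)) (u : V → ℝ) : ℝ :=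
  ∑ e ∈ E, |u e.2 - u e.1|

/-- The subdifferential of the graph total variation at `u`. -/
def subdiffJ {V : Type*} [Fintype V] (E : Finset (V × V)) (u : V → ℝ) : Set (V → ℝ) :=
  {us | ∀ h : V → ℝ, (∑ v, (h v - u v) * us v) + tvJ E u ≤ tvJ E h}

/-- The divergence of an edge function `H`:
`(div H)(v) = ∑_{(w,v) ∈ E} H((w,v)) - ∑_{(v,w) ∈ E} H((v,w))`. -/
def gdiv {V : Type*} [DecidableEq V] (E : Finset (V × V)) (H : V × V → ℝ) : V → ℝ :=
  fun v => (∑ e ∈ E, if e.2 = v then H e else 0) - (∑ e ∈ E, if e.1 = v then H e else 0)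

/-- The ℓ² norm on `ℝ^V`. -/
def norm2 {V : Type*} [Fintype V] (u : V → ℝ) : ℝ :=
  Real.sqrt (∑ v, (u v) ^ 2)

/-- `u` minimizes `w ↦ ½‖f - w‖₂² + α J(w)` over `ℝ^V`. -/
def IsROFMinimizer {V : Type*} [Fintype V] (E : Finset (V × V)) (f : V → ℝ) (α : ℝ)
    (u : V → ℝ) : Prop :=
  ∀ w : V → ℝ,
    (1 / 2) * (∑ v, (f v - u v) ^ 2) + α * tvJ E u ≤
      (1 / 2) * (∑ v, (f v - w v) ^ 2) + α * tvJ E w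

/-- `u : [0,∞) → ℝ^V` is a TV flow solution with datum `f`: it is Lipschitz on `[0,∞)`,
`u(0) = f`, and `-u'(t) ∈ ∂J(u(t))` for almost every `t > 0`. -/
def IsTVFlowSolution {V : Type*} [Fintype V] (E : Finset (V × V)) (f : V → ℝ)
    (u : ℝ → V → ℝ) : Prop :=
  u 0 = f ∧ (∃ L : NNReal, LipschitzOnWith L u (Set.Ici 0)) ∧
    ∃ u' : ℝ → V → ℝ, ∀ᵐ t ∂(volume : Measure ℝ), 0 < t →
      HasDerivAt u (u' t) t ∧ (fun v => -(u' t v)) ∈ subdiffJ E (u t)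

/-!
Since `J` is sublinear, the optimality condition `f - u_α ∈ α ∂J(u_α)` of the ROF problem splits
into `⟨g, f - u_α⟩ ≤ α J(g)` for all `g`, i.e. `f - u_α ∈ α ∂J(0)`, and
`⟨u_α, f - u_α⟩ ≥ α J(u_α)`. For `u = f - α p` with `p ∈ ∂J(0)` the latter gives
`⟨u_α, u⟩ ≥ ‖u_α‖₂²`, and Cauchy–Schwarz yields `‖u_α‖₂ ≤ ‖u‖₂`.
-/

open Filter Topology

section TotalVariation

variable {V : Type*} (E : Finset (V × V))

lemma tvJ_nonneg (u : V → ℝ) : 0 ≤ tvJ E u :=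
  Finset.sum_nonneg fun _ _ => abs_nonneg _

@[simp]
lemma tvJ_zero : tvJ E (0 : V → ℝ) = 0 := by
  simp [tvJ]

lemma tvJ_add_le (u h : V → ℝ) : tvJ E (u + h) ≤ tvJ E u + tvJ E h := by
  unfold tvJ
  rw [← Finset.sum_add_distrib]
  refine Finset.sum_le_sum fun e _ => ?_
  calc |(u + h) e.2 - (u + h) e.1| = |(u e.2 - u e.1) + (h e.2 - h e.1)| := by
        rw [Pi.add_apply, Pi.add_apply, add_sub_add_comm]
    _ ≤ |u e.2 - u e.1| + |h e.2 - h e.1| := abs_add_le _ _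

lemma tvJ_smul (c : ℝ) (u : V → ℝ) : tvJ E (c • u) = |c| * tvJ E u := by
  simp only [tvJ, Finset.mul_sum, Pi.smul_apply, smul_eq_mul, ← mul_sub, abs_mul]

lemma tvJ_add_smul_sub_le (u h : V → ℝ) {t : ℝ} (ht₀ : 0 ≤ t) (ht₁ : t ≤ 1) :
    tvJ E (u + t • (h - u)) ≤ (1 - t) * tvJ E u + t * tvJ E h := by
  have hsplit : u + t • (h - u) = (1 - t) • u + t • h := by
    rw [smul_sub, sub_smul, one_smul]; abel
  calc tvJ E (u + t • (h - u)) ≤ tvJ E ((1 - t) • u) + tvJ E (t • h) :=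
        hsplit ▸ tvJ_add_le E _ _
    _ = (1 - t) * tvJ E u + t * tvJ E h := by
        rw [tvJ_smul, tvJ_smul, abs_of_nonneg (sub_nonneg.2 ht₁), abs_of_nonneg ht₀]

variable [Fintype V]

lemma mem_subdiffJ_zero_iff {p : V → ℝ} : p ∈ subdiffJ E 0 ↔ ∀ h, h ⬝ᵥ p ≤ tvJ E h := by
  simp [subdiffJ, dotProduct]

lemma zero_mem_subdiffJ_zero : (0 : V → ℝ) ∈ subdiffJ E 0 :=
  (mem_subdiffJ_zero_iff E).2 fun h => by simpa using tvJ_nonneg E h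

lemma exists_mem_subdiffJ_zero_smul_eq {α : ℝ} (hα : 0 ≤ α) {w : V → ℝ}
    (hw : ∀ g, g ⬝ᵥ w ≤ α * tvJ E g) : ∃ p ∈ subdiffJ E 0, α • p = w := by
  rcases hα.eq_or_lt with rfl | hα
  · have hww : w ⬝ᵥ w = 0 :=
      le_antisymm (by simpa using hw w) (Finset.sum_nonneg fun v _ => mul_self_nonneg (w v))
    exact ⟨0, zero_mem_subdiffJ_zero E, by simp [dotProduct_self_eq_zero.1 hww]⟩
  · refine ⟨α⁻¹ • w, (mem_subdiffJ_zero_iff E).2 fun h => ?_, smul_inv_smul₀ hα.ne' w⟩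
    rw [dotProduct_smul, smul_eq_mul, inv_mul_le_iff₀ hα]
    exact hw h

end TotalVariation

lemma nonpos_of_forall_le_mul {a C : ℝ} (h : ∀ t : ℝ, 0 < t → t ≤ 1 → a ≤ t * C) : a ≤ 0 := by
  have hlim : Tendsto (fun t : ℝ => t * C) (𝓝 0) (𝓝 0) := by
    simpa using (tendsto_id (x := 𝓝 (0 : ℝ))).mul_const C
  exact ge_of_tendsto (hlim.mono_left nhdsWithin_le_nhds) <|
    Filter.mem_of_superset (Ioc_mem_nhdsGT one_pos) fun t ht => h t ht.1 ht.2

section DotProduct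

variable {V : Type*} [Fintype V]

lemma sum_sq_eq_dotProduct (u : V → ℝ) : ∑ v, u v ^ 2 = u ⬝ᵥ u := by
  simp [dotProduct, sq]

lemma norm2_le_of_dotProduct_self_le {x y : V → ℝ}
    (h : x ⬝ᵥ x ≤ x ⬝ᵥ y) : norm2 x ≤ norm2 y := by
  have hsq : norm2 x ^ 2 = x ⬝ᵥ x := by
    rw [norm2, Real.sq_sqrt (Finset.sum_nonneg fun v _ => sq_nonneg _), sum_sq_eq_dotProduct]
  have hcs : x ⬝ᵥ y ≤ norm2 x * norm2 y := Real.sum_mul_le_sqrt_mul_sqrt _ _ _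
  have hx : 0 ≤ norm2 x := Real.sqrt_nonneg _
  have hy : 0 ≤ norm2 y := Real.sqrt_nonneg _
  nlinarith

end DotProduct

namespace IsROFMinimizer

variable {V : Type*} [Fintype V] {E : Finset (V × V)} {f : V → ℝ} {α : ℝ} {u : V → ℝ}

/-- The optimality condition `f - u ∈ α ∂J(u)`. -/
lemma sub_dotProduct_add_le (hα : 0 ≤ α) (hu : IsROFMinimizer E f α u) (h : V → ℝ) :
    (h - u) ⬝ᵥ (f - u) + α * tvJ E u ≤ α * tvJ E h := by
  suffices ∀ t : ℝ, 0 < t → t ≤ 1 →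
      (h - u) ⬝ᵥ (f - u) + α * tvJ E u - α * tvJ E h ≤ t * ((h - u) ⬝ᵥ (h - u) / 2) by
    linarith [nonpos_of_forall_le_mul this]
  intro t ht₀ ht₁
  have hmin := hu (u + t • (h - u))
  have hexpand : ∑ v, (f v - (u + t • (h - u)) v) ^ 2 =
      ∑ v, (f v - u v) ^ 2 - 2 * t * ((h - u) ⬝ᵥ (f - u)) + t ^ 2 * ((h - u) ⬝ᵥ (h - u)) := by
    simp only [dotProduct, Finset.mul_sum, ← Finset.sum_sub_distrib, ← Finset.sum_add_distrib]
    refine Finset.sum_congr rfl fun v _ => ?_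
    simp only [Pi.add_apply, Pi.sub_apply, Pi.smul_apply, smul_eq_mul]
    ring
  rw [hexpand] at hmin
  have hconv := mul_le_mul_of_nonneg_left (tvJ_add_smul_sub_le E u h ht₀.le ht₁) hα
  refine le_of_mul_le_mul_left ?_ ht₀
  nlinarith

lemma dotProduct_le (hα : 0 ≤ α) (hu : IsROFMinimizer E f α u) (g : V → ℝ) :
    g ⬝ᵥ (f - u) ≤ α * tvJ E g := by
  have hopt := hu.sub_dotProduct_add_le hα (u + g)
  rw [add_sub_cancel_left] at hopt
  nlinarith [mul_le_mul_of_nonneg_left (tvJ_add_le E u g) hα]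

lemma le_dotProduct (hα : 0 ≤ α) (hu : IsROFMinimizer E f α u) :
    α * tvJ E u ≤ u ⬝ᵥ (f - u) := by
  have hopt := hu.sub_dotProduct_add_le hα 0
  rw [zero_sub, neg_dotProduct, tvJ_zero, mul_zero] at hopt
  linarith

end IsROFMinimizer

theorem rof_minimizer_is_min_norm_element_general
    {V : Type*} [Fintype V] (E : Finset (V × V))
    (f : V → ℝ) (α : ℝ) (hα : 0 ≤ α)
    (uα : V → ℝ) (huα : IsROFMinimizer E f α uα) :
    uα ∈ (fun us => f - α • us) '' subdiffJ E (0 : V → ℝ) ∧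
      ∀ u ∈ (fun us => f - α • us) '' subdiffJ E (0 : V → ℝ), norm2 uα ≤ norm2 u := by
  obtain ⟨p, hp, hαp⟩ := exists_mem_subdiffJ_zero_smul_eq E hα (huα.dotProduct_le hα)
  refine ⟨⟨p, hp, by simp only [hαp, sub_sub_cancel]⟩, ?_⟩
  rintro _ ⟨q, hq, rfl⟩
  apply norm2_le_of_dotProduct_self_le
  have hJ := mul_le_mul_of_nonneg_left ((mem_subdiffJ_zero_iff E).1 hq uα) hα
  calc uα ⬝ᵥ uα ≤ uα ⬝ᵥ (f - uα) + uα ⬝ᵥ uα - α * (uα ⬝ᵥ q) := by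
        linarith [huα.le_dotProduct hα]
    _ = uα ⬝ᵥ (f - α • q) := by
        rw [dotProduct_sub, dotProduct_sub, dotProduct_smul, smul_eq_mul]; ring

/-- the ROF minimizer `u_α` is the element of minimal ℓ² norm in
`f - α ∂J(0)`. -/
theorem rof_minimizer_is_min_norm_element
    {V : Type*} [Fintype V] [DecidableEq V] [Nonempty V] (E : Finset (V × V))
    (hE : ∀ v w : V, (v, w) ∈ E → (w, v) ∉ E)
    (hconn : (SimpleGraph.fromRel (fun v w : V => (v, w) ∈ E)).Connected)
    (f : V → ℝ) (α : ℝ) (hα : 0 ≤ α)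
    (uα : V → ℝ) (huα : IsROFMinimizer E f α uα) :
    uα ∈ (fun us => f - α • us) '' subdiffJ E (0 : V → ℝ) ∧
      ∀ u ∈ (fun us => f - α • us) '' subdiffJ E (0 : V → ℝ), norm2 uα ≤ norm2 u :=
  rof_minimizer_is_min_norm_element_general E f α hα uα huα
end
end

section
/- Total variation regularization and total variation flow on graphs are not equivalent in general: there exist a finite set V, an oriented edge set E ⊆ V × V with (v,w) ∈ E implying (w,v) ∉ E whose underlying undirected graph is connected, a datum f ∈ ℝ^V, a TV flow solution u with datum f, and a time α > 0 such that u(α) ≠ u_α, where u_α is the ROF minimizer with parameter α and datum f. -/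
open Finset MeasureTheory

noncomputable section

/-!
On the tree with edges `0 → 1 → 2`, `2 → 3`, `2 → 4` and datum `f = (8, 0, 5, -9, -9)` the TV
flow can be written down explicitly. It is affine in `t` on `[0, 1]`, `[1, 6]`, `[6, 12]` and
`[12, ∞)`, and on each phase its velocity is `-div z` for one edge field `z` with `|z| ≤ 1` that
equals the sign of every nonzero edge difference of `u(t)`; such a `div z` is a subgradient of
`J` at `u(t)`. The values at vertices `1` and `2` meet at `t = 1` and separate again, so
`u(2) = (6, 2, 1, -7, -7)`. The ROF minimizer for `α = 2` is certified in the same way, by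
`f - u_α = α div z` with `z` adapted to `u_α = (6, 3/2, 3/2, -7, -7)`, and it differs from
`u(2)` at vertex `1`.
-/

section GraphTV

variable {V : Type*} [Fintype V]

def IsCalibration (E : Finset (V × V)) (u : V → ℝ) (z : V × V → ℝ) : Prop :=
  ∀ e ∈ E, |z e| ≤ 1 ∧ z e * (u e.2 - u e.1) = |u e.2 - u e.1|

theorem sum_mul_gdiv [DecidableEq V] (E : Finset (V × V)) (z : V × V → ℝ) (g : V → ℝ) :
    ∑ v, g v * gdiv E z v = ∑ e ∈ E, z e * (g e.2 - g e.1) := by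
  simp only [gdiv, mul_sub, Finset.mul_sum, Finset.sum_sub_distrib, mul_ite, mul_zero]
  rw [Finset.sum_comm (s := univ), Finset.sum_comm (s := univ)]
  congr 1 <;> refine Finset.sum_congr rfl fun e _ => ?_
  · simp [mul_comm]
  · simp [mul_comm]

theorem gdiv_mem_subdiffJ [DecidableEq V] {E : Finset (V × V)} {u : V → ℝ} {z : V × V → ℝ}
    (hz : IsCalibration E u z) : gdiv E z ∈ subdiffJ E u := by
  intro h
  rw [sum_mul_gdiv, tvJ, tvJ, ← Finset.sum_add_distrib]
  refine Finset.sum_le_sum fun e he => ?_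
  obtain ⟨hz_le, hz_eq⟩ := hz e he
  have : z e * (h e.2 - h e.1) ≤ |h e.2 - h e.1| :=
    calc z e * (h e.2 - h e.1) ≤ |z e| * |h e.2 - h e.1| := by
          rw [← abs_mul]; exact le_abs_self _
      _ ≤ |h e.2 - h e.1| := mul_le_of_le_one_left (abs_nonneg _) hz_le
  linarith

theorem isROFMinimizer_of_mem_subdiffJ {E : Finset (V × V)} {f u p : V → ℝ} {α : ℝ}
    (hα : 0 ≤ α) (hp : p ∈ subdiffJ E u) (hfu : f - u = α • p) : IsROFMinimizer E f α u := by
  intro w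
  have hfu' : ∀ v, f v - u v = α * p v := fun v => congrFun hfu v
  have hquad : ∑ v, (f v - u v) ^ 2 - 2 * α * ∑ v, (w v - u v) * p v ≤ ∑ v, (f v - w v) ^ 2 := by
    rw [Finset.mul_sum, ← Finset.sum_sub_distrib]
    refine Finset.sum_le_sum fun v _ => ?_
    have : 2 * α * ((w v - u v) * p v) = 2 * (w v - u v) * (f v - u v) := by rw [hfu']; ring
    nlinarith [sq_nonneg (w v - u v)]
  nlinarith [mul_le_mul_of_nonneg_left (hp w) hα]

theorem isTVFlowSolution_of_countable {E : Finset (V × V)} {f : V → ℝ} {u : ℝ → V → ℝ}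
    (u' : ℝ → V → ℝ) {S : Set ℝ} (hS : S.Countable) (h0 : u 0 = f) {L : NNReal}
    (hL : LipschitzWith L u)
    (h : ∀ t, 0 < t → t ∉ S → HasDerivAt u (u' t) t ∧ -u' t ∈ subdiffJ E (u t)) :
    IsTVFlowSolution E f u := by
  refine ⟨h0, ⟨L, hL.lipschitzOnWith⟩, u', ?_⟩
  filter_upwards [hS.measure_zero volume |> measure_eq_zero_iff_ae_notMem.mp] with t ht hpos
  exact h t hpos ht

theorem hasDerivAt_of_eqOn_affine {E : Type*} [NormedAddCommGroup E] [NormedSpace ℝ E]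
    {u : ℝ → E} {U : Set ℝ} (hU : IsOpen U) {c d : E} (hu : Set.EqOn u (fun s => c + s • d) U)
    {t : ℝ} (ht : t ∈ U) : HasDerivAt u d t := by
  have : HasDerivAt (fun s : ℝ => c + s • d) d t := by
    simpa using ((hasDerivAt_id t).smul_const d).const_add c
  exact this.congr_of_eventuallyEq (Filter.mem_of_superset (hU.mem_nhds ht) hu)

theorem lipschitzWith_of_affine {K : NNReal} {g : ℝ → ℝ} (a b : ℝ) (hg : ∀ t, g t = a * t + b)
    (ha : |a| ≤ K) : LipschitzWith K g := by
  refine LipschitzWith.of_dist_le_mul fun x y => ?_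
  rw [Real.dist_eq, Real.dist_eq, hg, hg, show a * x + b - (a * y + b) = a * (x - y) by ring,
    abs_mul]
  exact mul_le_mul_of_nonneg_right ha (abs_nonneg _)

theorem lipschitzWith_pi_of_forall {α ι : Type*} [PseudoEMetricSpace α] [Fintype ι]
    {K : NNReal} {g : α → ι → ℝ} (h : ∀ i, LipschitzWith K fun x => g x i) :
    LipschitzWith K g :=
  fun x y => edist_pi_le_iff.2 fun i => h i x y

theorem hasDerivAt_and_mem_subdiffJ_of_affine [DecidableEq V] {E : Finset (V × V)}
    {u : ℝ → V → ℝ} {U : Set ℝ} (hU : IsOpen U) {c d : V → ℝ}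
    {z : V × V → ℝ} (hu : Set.EqOn u (fun s => c + s • d) U) (hdiv : gdiv E z = -d)
    (hz : ∀ s ∈ U, IsCalibration E (u s) z) {t : ℝ} (ht : t ∈ U) :
    HasDerivAt u d t ∧ -d ∈ subdiffJ E (u t) :=
  ⟨hasDerivAt_of_eqOn_affine hU hu ht, hdiv ▸ gdiv_mem_subdiffJ (hz t ht)⟩

end GraphTV

namespace TVCounterexample

def edges : Finset (Fin 5 × Fin 5) := {(0, 1), (1, 2), (2, 3), (2, 4)}

def datum : Fin 5 → ℝ := ![8, 0, 5, -9, -9]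

-- Each coordinate is a max/min of the affine pieces of its phases, which makes the
-- Lipschitz bound immediate.
def flow (t : ℝ) : Fin 5 → ℝ := ![
  max (8 - t) (max (5 - t / 2) (-1)),
  min (min (2 * t) 2) (max (5 - t / 2) (-1)),
  max (max (5 - 3 * t) (3 - t)) (min (t / 3 - 5) (-1)),
  min (min (t - 9) (t / 3 - 5)) (-1),
  min (min (t - 9) (t / 3 - 5)) (-1)]

def velocity (t : ℝ) : Fin 5 → ℝ :=
  if t < 1 then ![-1, 2, -3, 1, 1]
  else if t < 6 then ![-1, 0, -1, 1, 1]
  else if t < 12 then ![-1 / 2, -1 / 2, 1 / 3, 1 / 3, 1 / 3]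
  else 0

def rofSolution : Fin 5 → ℝ := ![6, 3 / 2, 3 / 2, -7, -7]

theorem flow_eq_of_mem_Icc_zero_one {t : ℝ} (ht : t ∈ Set.Icc 0 1) :
    flow t = ![8, 0, 5, -9, -9] + t • ![-1, 2, -3, 1, 1] := by
  obtain ⟨h0, h1⟩ := ht
  funext v
  fin_cases v <;> simp [flow] <;> grind

theorem flow_eq_of_mem_Icc_one_six {t : ℝ} (ht : t ∈ Set.Icc 1 6) :
    flow t = ![8, 2, 3, -9, -9] + t • ![-1, 0, -1, 1, 1] := by
  obtain ⟨h0, h1⟩ := ht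
  funext v
  fin_cases v <;> simp [flow] <;> grind

theorem flow_eq_of_mem_Icc_six_twelve {t : ℝ} (ht : t ∈ Set.Icc 6 12) :
    flow t = ![5, 5, -5, -5, -5] + t • ![-1 / 2, -1 / 2, 1 / 3, 1 / 3, 1 / 3] := by
  obtain ⟨h0, h1⟩ := ht
  funext v
  fin_cases v <;> simp [flow] <;> grind

theorem flow_eq_of_twelve_le {t : ℝ} (ht : 12 ≤ t) : flow t = (fun _ => -1) + t • 0 := by
  funext v
  fin_cases v <;> simp [flow] <;> grind

def calibration₁ : Fin 5 × Fin 5 → ℝ := fun e => if e = (1, 2) then 1 else -1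

def calibration₃ : Fin 5 × Fin 5 → ℝ := fun e =>
  if e = (0, 1) then -1 / 2 else if e = (1, 2) then -1 else -1 / 3

def rofCalibration : Fin 5 × Fin 5 → ℝ := fun e => if e = (1, 2) then -1 / 4 else -1

theorem hasDerivAt_flow_and_mem_subdiffJ_of_mem_Ioo_zero_one {t : ℝ} (ht : t ∈ Set.Ioo 0 1) :
    HasDerivAt flow (velocity t) t ∧ -velocity t ∈ subdiffJ edges (flow t) := by
  rw [velocity, if_pos ht.2]
  refine hasDerivAt_and_mem_subdiffJ_of_affine (z := calibration₁) isOpen_Ioo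
    (fun s hs => flow_eq_of_mem_Icc_zero_one (Set.Ioo_subset_Icc_self hs)) ?_ (fun s hs => ?_) ht
  · funext v
    fin_cases v <;> simp [gdiv, edges, calibration₁, Finset.sum_insert, Prod.ext_iff] <;> norm_num
  · obtain ⟨h0, h1⟩ := hs
    rw [flow_eq_of_mem_Icc_zero_one ⟨h0.le, h1.le⟩]
    intro e he
    simp only [edges, Finset.mem_insert, Finset.mem_singleton] at he
    rcases he with rfl | rfl | rfl | rfl <;> simp [calibration₁] <;> grind

theorem hasDerivAt_flow_and_mem_subdiffJ_of_mem_Ioo_one_six {t : ℝ} (ht : t ∈ Set.Ioo 1 6) :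
    HasDerivAt flow (velocity t) t ∧ -velocity t ∈ subdiffJ edges (flow t) := by
  rw [velocity, if_neg (by linarith [ht.1]), if_pos ht.2]
  refine hasDerivAt_and_mem_subdiffJ_of_affine (z := fun _ => -1) isOpen_Ioo
    (fun s hs => flow_eq_of_mem_Icc_one_six (Set.Ioo_subset_Icc_self hs)) ?_ (fun s hs => ?_) ht
  · funext v
    fin_cases v <;> simp [gdiv, edges, Finset.sum_insert, Prod.ext_iff]
  · obtain ⟨h0, h1⟩ := hs
    rw [flow_eq_of_mem_Icc_one_six ⟨h0.le, h1.le⟩]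
    intro e he
    simp only [edges, Finset.mem_insert, Finset.mem_singleton] at he
    rcases he with rfl | rfl | rfl | rfl <;> simp <;> grind

theorem hasDerivAt_flow_and_mem_subdiffJ_of_mem_Ioo_six_twelve {t : ℝ}
    (ht : t ∈ Set.Ioo 6 12) :
    HasDerivAt flow (velocity t) t ∧ -velocity t ∈ subdiffJ edges (flow t) := by
  rw [velocity, if_neg (by linarith [ht.1]), if_neg (by linarith [ht.1]), if_pos ht.2]
  refine hasDerivAt_and_mem_subdiffJ_of_affine (z := calibration₃) isOpen_Ioo
    (fun s hs => flow_eq_of_mem_Icc_six_twelve (Set.Ioo_subset_Icc_self hs)) ?_ (fun s hs => ?_) ht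
  · funext v
    fin_cases v <;> simp [gdiv, edges, calibration₃, Finset.sum_insert, Prod.ext_iff] <;> norm_num
  · obtain ⟨h0, h1⟩ := hs
    rw [flow_eq_of_mem_Icc_six_twelve ⟨h0.le, h1.le⟩]
    intro e he
    simp only [edges, Finset.mem_insert, Finset.mem_singleton] at he
    rcases he with rfl | rfl | rfl | rfl <;> simp [calibration₃] <;> grind

theorem hasDerivAt_flow_and_mem_subdiffJ_of_twelve_lt {t : ℝ} (ht : 12 < t) :
    HasDerivAt flow (velocity t) t ∧ -velocity t ∈ subdiffJ edges (flow t) := by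
  rw [velocity, if_neg (by linarith), if_neg (by linarith), if_neg (by linarith)]
  refine hasDerivAt_and_mem_subdiffJ_of_affine (z := 0) isOpen_Ioi
    (fun s hs => flow_eq_of_twelve_le hs.le) ?_ (fun s hs e _ => ?_) ht
  · funext v
    simp [gdiv]
  · simp [flow_eq_of_twelve_le hs.le]

theorem hasDerivAt_flow_and_mem_subdiffJ {t : ℝ} (ht : 0 < t) (hS : t ∉ ({1, 6, 12} : Set ℝ)) :
    HasDerivAt flow (velocity t) t ∧ -velocity t ∈ subdiffJ edges (flow t) := by
  simp only [Set.mem_insert_iff, Set.mem_singleton_iff, not_or] at hS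
  obtain ⟨h1, h6, h12⟩ := hS
  rcases Ne.lt_or_gt h1 with h1 | h1
  · exact hasDerivAt_flow_and_mem_subdiffJ_of_mem_Ioo_zero_one ⟨ht, h1⟩
  rcases Ne.lt_or_gt h6 with h6 | h6
  · exact hasDerivAt_flow_and_mem_subdiffJ_of_mem_Ioo_one_six ⟨h1, h6⟩
  rcases Ne.lt_or_gt h12 with h12 | h12
  · exact hasDerivAt_flow_and_mem_subdiffJ_of_mem_Ioo_six_twelve ⟨h6, h12⟩
  · exact hasDerivAt_flow_and_mem_subdiffJ_of_twelve_lt h12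

theorem lipschitzWith_flow : LipschitzWith 3 flow := by
  have l₁ : LipschitzWith 3 fun t : ℝ => 8 - t :=
    lipschitzWith_of_affine (-1) 8 (fun _ => by ring) (by norm_num)
  have l₂ : LipschitzWith 3 fun t : ℝ => 5 - t / 2 :=
    lipschitzWith_of_affine (-1 / 2) 5 (fun _ => by ring) (by norm_num [abs_div])
  have l₃ : LipschitzWith 3 fun t : ℝ => 2 * t :=
    lipschitzWith_of_affine 2 0 (fun _ => by ring) (by norm_num)
  have l₄ : LipschitzWith 3 fun t : ℝ => 5 - 3 * t :=
    lipschitzWith_of_affine (-3) 5 (fun _ => by ring) (by norm_num)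
  have l₅ : LipschitzWith 3 fun t : ℝ => 3 - t :=
    lipschitzWith_of_affine (-1) 3 (fun _ => by ring) (by norm_num)
  have l₆ : LipschitzWith 3 fun t : ℝ => t / 3 - 5 :=
    lipschitzWith_of_affine (1 / 3) (-5) (fun _ => by ring) (by norm_num [abs_div])
  have l₇ : LipschitzWith 3 fun t : ℝ => t - 9 :=
    lipschitzWith_of_affine 1 (-9) (fun _ => by ring) (by norm_num)
  refine lipschitzWith_pi_of_forall fun i => ?_
  fin_cases i
  · simpa [flow] using l₁.max (l₂.max_const (-1))
  · simpa [flow] using (l₃.min_const 2).min (l₂.max_const (-1))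
  · simpa [flow] using (l₄.max l₅).max (l₆.min_const (-1))
  · simpa [flow] using (l₇.min l₆).min_const (-1)
  · simpa [flow] using (l₇.min l₆).min_const (-1)

theorem isTVFlowSolution_flow : IsTVFlowSolution edges datum flow :=
  isTVFlowSolution_of_countable velocity (Set.toFinite _).countable
    (by rw [flow_eq_of_mem_Icc_zero_one ⟨le_rfl, zero_le_one⟩]; simp [datum]) lipschitzWith_flow
    fun _ => hasDerivAt_flow_and_mem_subdiffJ

theorem isROFMinimizer_rofSolution : IsROFMinimizer edges datum 2 rofSolution := by
  refine isROFMinimizer_of_mem_subdiffJ zero_le_two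
    (gdiv_mem_subdiffJ (z := rofCalibration) fun e he => ?_) ?_
  · simp only [edges, Finset.mem_insert, Finset.mem_singleton] at he
    rcases he with rfl | rfl | rfl | rfl <;> simp [rofCalibration, rofSolution] <;> norm_num
  · funext v
    fin_cases v <;> simp [gdiv, edges, rofCalibration, datum, rofSolution, Finset.sum_insert,
      Prod.ext_iff] <;> norm_num

theorem connected_edges : (SimpleGraph.fromRel fun v w : Fin 5 => (v, w) ∈ edges).Connected := by
  decide

theorem flow_two_ne_rofSolution : flow 2 ≠ rofSolution := by
  intro h
  have h₁ := congrFun h 1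
  rw [flow_eq_of_mem_Icc_one_six ⟨one_le_two, by norm_num⟩] at h₁
  norm_num [rofSolution] at h₁

end TVCounterexample

open TVCounterexample

/-- TV regularization and TV flow on graphs are not equivalent in general. -/
theorem tvflow_rof_not_equivalent :
    ∃ (V : Type) (iV : Fintype V) (_ : Nonempty V) (E : Finset (V × V)),
      (∀ v w : V, (v, w) ∈ E → (w, v) ∉ E) ∧
      (SimpleGraph.fromRel (fun v w : V => (v, w) ∈ E)).Connected ∧
      ∃ (f : V → ℝ) (u : ℝ → V → ℝ) (α : ℝ) (uα : V → ℝ),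
        @IsTVFlowSolution V iV E f u ∧ 0 < α ∧
        @IsROFMinimizer V iV E f α uα ∧ u α ≠ uα := by
  refine ⟨Fin 5, inferInstance, inferInstance, edges, by decide, connected_edges, datum, flow, 2,
    rofSolution, isTVFlowSolution_flow, two_pos, isROFMinimizer_rofSolution,
    flow_two_ne_rofSolution⟩
end
end
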